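/- In the extension construction, let k be a non-negative integer. If ab ∈ M_0' (with a, b ∈ X_0), then a x_1^k b ∈ I; and if ab − cd ∈ M_0' (with a, b, c, d ∈ X_0), then a x_1^k b − c x_1^k d ∈ I, where I is the two-sided ideal of K⟨X⟩ generated by M'. -/

import Mathlib

/-!
For `e ∈ X₀` the relation `xₙ e - e x₁` lies in `M'`, so modulo `I` the letter `e`
semi-commutes: `e x₁^k ≡ xₙ^k e`. Hence `a x₁^k b ≡ xₙ^k a b`, and the relations of `M₀'`,
which lie in `M'`, give the claim after left multiplication by `xₙ^k`.
-/

noncomputable section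

/-- The monomial in the free algebra `K⟨X⟩ = MonoidAlgebra K (FreeMonoid X)`
corresponding to a word `w`. -/
def mOfW (K : Type*) [Field K] {X : Type*} (w : FreeMonoid X) :
    MonoidAlgebra K (FreeMonoid X) :=
  MonoidAlgebra.single w 1

/-- The degree-`m` monomial `u_1 u_2 ⋯ u_m`. -/
def mOf (K : Type*) [Field K] {X : Type*} {m : ℕ} (u : Fin m → X) :
    MonoidAlgebra K (FreeMonoid X) :=
  mOfW K (FreeMonoid.ofList (List.ofFn u))

/-- The degree-2 monomial `ab`. -/
def m2 (K : Type*) [Field K] {X : Type*} (a b : X) :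
    MonoidAlgebra K (FreeMonoid X) :=
  mOfW K (FreeMonoid.of a * FreeMonoid.of b)

/-- The support of an element of `K⟨X⟩`: the set of words occurring with
nonzero coefficient. -/
def suppOf {K X : Type*} [Field K] (f : MonoidAlgebra K (FreeMonoid X)) :
    Finset (FreeMonoid X) :=
  Finsupp.support f.coeff

/-- The two-sided ideal generated by a set `s` in a `K`-algebra, viewed as the
`K`-submodule spanned by all products `p * a * q` with `a ∈ s`. -/
def idealSpan (K : Type*) [Field K] {A : Type*} [Ring A] [Algebra K A]
    (s : Set A) : Submodule K A :=
  Submodule.span K {x | ∃ p q : A, ∃ a ∈ s, x = p * a * q}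

/-- `M` is a Quasierhöhungssystem (QHS) on the totally ordered set `X`. -/
def IsQHS (K : Type*) [Field K] {X : Type*} [LinearOrder X]
    (M : Set (MonoidAlgebra K (FreeMonoid X))) : Prop :=
  M.PairwiseDisjoint (fun g => (suppOf g : Set (FreeMonoid X))) ∧
  (⋃ g ∈ M, (suppOf g : Set (FreeMonoid X))) =
    {w | ∃ a b : X, b ≤ a ∧ w = FreeMonoid.of a * FreeMonoid.of b} ∧
  ∀ g ∈ M,
    (∃ a b : X, b ≤ a ∧ g = m2 K a b) ∨
    (∃ a b c d : X, d ≤ c ∧ c < b ∧ b ≤ a ∧ g = m2 K a b - m2 K c d) ∨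
    (∃ a b d : X, d < b ∧ b < a ∧ g = m2 K a b - m2 K b d)

/-- The maximal element `b = max X`. -/
def topEl (X : Type*) [Fintype X] [LinearOrder X] [Nonempty X] : X :=
  Finset.univ.max' Finset.univ_nonempty

/-- The minimal element `a = min X`. -/
def botEl (X : Type*) [Fintype X] [LinearOrder X] [Nonempty X] : X :=
  Finset.univ.min' Finset.univ_nonempty

/-- The ideal `I_M`, generated by `M' = M \ {ba}` where `a = min X`, `b = max X`. -/
def qhsIdeal (K : Type*) [Field K] {X : Type*} [Fintype X] [LinearOrder X] [Nonempty X]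
    (M : Set (MonoidAlgebra K (FreeMonoid X))) :
    Submodule K (MonoidAlgebra K (FreeMonoid X)) :=
  idealSpan K (M \ {m2 K (topEl X) (botEl X)})

/-- The right-to-left lexicographical strict order on degree-`m` monomials. -/
def rlLt {X : Type*} [LinearOrder X] {m : ℕ} (u v : Fin m → X) : Prop :=
  ∃ j : Fin m, u j < v j ∧ ∀ l : Fin m, j < l → u l = v l

/-- The monomial `u` is minimal with respect to the QHS `M`. -/
def MinimalMon (K : Type*) [Field K] {X : Type*} [Fintype X] [LinearOrder X] [Nonempty X]
    (M : Set (MonoidAlgebra K (FreeMonoid X))) {m : ℕ} (u : Fin m → X) : Prop :=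
  mOf K u ∉ qhsIdeal K M ∧
    ∀ v : Fin m → X, mOf K u - mOf K v ∈ qhsIdeal K M → u = v ∨ rlLt u v

/-- The monomial `u` is tame with respect to the QHS `M`. -/
def TameMon (K : Type*) [Field K] {X : Type*} [Fintype X] [LinearOrder X] [Nonempty X]
    (M : Set (MonoidAlgebra K (FreeMonoid X))) {m : ℕ} (u : Fin m → X) : Prop :=
  MinimalMon K M u ∧ ∃ v : Fin m → X, ∃ j : Fin m,
    mOf K u - mOf K v ∈ qhsIdeal K M ∧ v j = topEl X ∧ ∀ l : Fin m, j < l → v l = u l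

/-- The monomial `u` is singular with respect to the QHS `M`: minimal and not tame. -/
def SingularMon (K : Type*) [Field K] {X : Type*} [Fintype X] [LinearOrder X] [Nonempty X]
    (M : Set (MonoidAlgebra K (FreeMonoid X))) {m : ℕ} (u : Fin m → X) : Prop :=
  MinimalMon K M u ∧ ¬ TameMon K M u

/-- The QHS `M` is regular: for some positive `m` there are no singular monomials
of degree `m`. -/
def RegularQHS (K : Type*) [Field K] {X : Type*} [Fintype X] [LinearOrder X] [Nonempty X]
    (M : Set (MonoidAlgebra K (FreeMonoid X))) : Prop :=
  ∃ m : ℕ, 0 < m ∧ ∀ u : Fin m → X, ¬ SingularMon K M u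

/-- `e ∈ X` is pure with respect to `M`: whenever `ab - ce ∈ M`,
one has `a ≥ b > c ≥ e`. -/
def PureEl (K : Type*) [Field K] {X : Type*} [LinearOrder X]
    (M : Set (MonoidAlgebra K (FreeMonoid X))) (e : X) : Prop :=
  ∀ a b c : X, m2 K a b - m2 K c e ∈ M → e ≤ c ∧ c < b ∧ b ≤ a

/-- The set `X₀ = {x_3, …, x_{n-2}}` (0-based: indices `2, …, n-3` of `Fin n`). -/
abbrev X0 (n : ℕ) := {x : Fin n // 2 ≤ x.val ∧ x.val + 3 ≤ n}

instance factNeZero (n : ℕ) [Fact (5 ≤ n)] : NeZero n :=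
  ⟨by have h := Fact.out (p := 5 ≤ n); omega⟩

instance factNonemptyX0 (n : ℕ) [Fact (5 ≤ n)] : Nonempty (X0 n) :=
  ⟨⟨⟨2, by have h := Fact.out (p := 5 ≤ n); omega⟩,
    ⟨le_refl 2, show 2 + 3 ≤ n by have h := Fact.out (p := 5 ≤ n); omega⟩⟩⟩

/-- The generator `x_j` of the paper (1-based index `j`) as an element of `Fin n`. -/
def px (n : ℕ) [NeZero n] (j : ℕ) : Fin n := (Fin.ofNat n (j - 1) : Fin n)

/-- The embedding `K⟨X₀⟩ → K⟨X⟩` induced by the inclusion `X₀ ⊆ X`. -/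
def emb (K : Type*) [Field K] (n : ℕ)
    (f : MonoidAlgebra K (FreeMonoid (X0 n))) : MonoidAlgebra K (FreeMonoid (Fin n)) :=
  MonoidAlgebra.ofCoeff (Finsupp.mapDomain (FreeMonoid.map (fun x : X0 n => (x : Fin n))) f.coeff)

/-- The set `M'` of the extension construction. -/
def Mext' (K : Type*) [Field K] (n : ℕ) [Fact (5 ≤ n)]
    (M0 : Set (MonoidAlgebra K (FreeMonoid (X0 n)))) :
    Set (MonoidAlgebra K (FreeMonoid (Fin n))) :=
  (emb K n '' (M0 \ {m2 K (topEl (X0 n)) (botEl (X0 n))})) ∪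
  {g | ∃ j : ℕ, 2 ≤ j ∧ j ≤ n - 2 ∧
      g = m2 K (px n n) (px n j) - m2 K (px n j) (px n 1)} ∪
  {g | ∃ j : ℕ, 2 ≤ j ∧ j ≤ n - 3 ∧
      g = m2 K (px n (n-1)) (px n (j+1)) - m2 K (px n j) (px n 2)} ∪
  {m2 K (px n n) (px n n) - m2 K (px n (n-1)) (px n 1),
   m2 K (px n n) (px n (n-1)) - m2 K (px n (n-2)) (px n 2),
   m2 K (px n (n-1)) (px n (n-1)) - m2 K (px n (n-2)) (px n 3),
   m2 K (px n (n-1)) (px n 2) - m2 K (px n 1) (px n 1)}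

/-- The set `M = M' ∪ {x_n x_1}` of the extension construction. -/
def Mext (K : Type*) [Field K] (n : ℕ) [Fact (5 ≤ n)]
    (M0 : Set (MonoidAlgebra K (FreeMonoid (X0 n)))) :
    Set (MonoidAlgebra K (FreeMonoid (Fin n))) :=
  Mext' K n M0 ∪ {m2 K (px n n) (px n 1)}

/-- The interleaved word `u_1 x_1^{ks 0} u_2 x_1^{ks 1} ⋯ x_1^{ks (m-2)} u_m`. -/
def ileave (n : ℕ) [NeZero n] {m : ℕ} (u : Fin m → Fin n) (ks : ℕ → ℕ) :
    FreeMonoid (Fin n) :=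
  (List.ofFn fun i : Fin m =>
    if i.val + 1 = m then FreeMonoid.of (u i)
    else FreeMonoid.of (u i) * (FreeMonoid.of (px n 1)) ^ ks i.val).prod

section IdealSpan

variable {K A : Type*} [Field K] [Ring A] [Algebra K A] {s : Set A}

theorem subset_idealSpan : s ⊆ idealSpan K s :=
  fun a ha => Submodule.subset_span ⟨1, 1, a, ha, by simp⟩

theorem mul_mem_idealSpan_left (r : A) {x : A} (hx : x ∈ idealSpan K s) :
    r * x ∈ idealSpan K s := by
  induction hx using Submodule.span_induction with
  | mem y hy =>
    obtain ⟨p, q, a, ha, rfl⟩ := hy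
    exact Submodule.subset_span ⟨r * p, q, a, ha, by simp only [mul_assoc]⟩
  | zero => simp
  | add y z _ _ hy hz => rw [mul_add]; exact add_mem hy hz
  | smul c y _ hy => rw [Algebra.mul_smul_comm]; exact Submodule.smul_mem _ c hy

theorem mul_mem_idealSpan_right (r : A) {x : A} (hx : x ∈ idealSpan K s) :
    x * r ∈ idealSpan K s := by
  induction hx using Submodule.span_induction with
  | mem y hy =>
    obtain ⟨p, q, a, ha, rfl⟩ := hy
    exact Submodule.subset_span ⟨p, q * r, a, ha, by simp only [mul_assoc]⟩
  | zero => simp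
  | add y z _ _ hy hz => rw [add_mul]; exact add_mem hy hz
  | smul c y _ hy => rw [Algebra.smul_mul_assoc]; exact Submodule.smul_mem _ c hy

theorem mul_pow_sub_pow_mul_mem_idealSpan {e y z : A} (h : e * y - z * e ∈ idealSpan K s)
    (k : ℕ) : e * y ^ k - z ^ k * e ∈ idealSpan K s := by
  induction k with
  | zero => simp
  | succ k ih =>
    have hsplit : e * y ^ (k + 1) - z ^ (k + 1) * e =
        (e * y ^ k - z ^ k * e) * y + z ^ k * (e * y - z * e) := by noncomm_ring
    rw [hsplit]
    exact add_mem (mul_mem_idealSpan_right y ih) (mul_mem_idealSpan_left _ h)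

end IdealSpan

section FreeAlgebra

variable {K : Type*} [Field K]

theorem mOfW_eq_of {X : Type*} (w : FreeMonoid X) :
    mOfW K w = MonoidAlgebra.of K (FreeMonoid X) w := rfl

theorem mOfW_mul {X : Type*} (w w' : FreeMonoid X) :
    mOfW K (w * w') = mOfW K w * mOfW K w' := by
  simp only [mOfW_eq_of, map_mul]

theorem mOfW_pow {X : Type*} (w : FreeMonoid X) (k : ℕ) :
    mOfW K (w ^ k) = mOfW K w ^ k := by
  simp only [mOfW_eq_of, map_pow]

theorem emb_eq_mapDomainRingHom (n : ℕ) :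
    emb K n = MonoidAlgebra.mapDomainRingHom K (FreeMonoid.map (Subtype.val : X0 n → Fin n)) :=
  rfl

theorem emb_m2 (n : ℕ) (a b : X0 n) : emb K n (m2 K a b) = m2 K (a : Fin n) (b : Fin n) := by
  simp [emb_eq_mapDomainRingHom, m2, mOfW]

theorem emb_sub (n : ℕ) (f g : MonoidAlgebra K (FreeMonoid (X0 n))) :
    emb K n (f - g) = emb K n f - emb K n g := by
  simp only [emb_eq_mapDomainRingHom, map_sub]

end FreeAlgebra

theorem px_val_add_one {n : ℕ} [NeZero n] (x : Fin n) : px n (x.val + 1) = x := by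
  ext
  simp [px]

section Extension

variable {K : Type*} [Field K] {n : ℕ} [Fact (5 ≤ n)]
  {M0 : Set (MonoidAlgebra K (FreeMonoid (X0 n)))}

theorem emb_mem_Mext' {g : MonoidAlgebra K (FreeMonoid (X0 n))}
    (hg : g ∈ M0 \ {m2 K (topEl (X0 n)) (botEl (X0 n))}) : emb K n g ∈ Mext' K n M0 :=
  Or.inl <| Or.inl <| Or.inl ⟨g, hg, rfl⟩

theorem m2_px_sub_m2_px_one_mem_Mext' (e : X0 n) :
    m2 K (px n n) (e : Fin n) - m2 K (e : Fin n) (px n 1) ∈ Mext' K n M0 := by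
  have h5 : 5 ≤ n := Fact.out
  have he := e.property
  refine Or.inl <| Or.inl <| Or.inr ⟨(e : Fin n).val + 1, by omega, by omega, ?_⟩
  rw [px_val_add_one]

/-- Moving `x₁^k` to the left across `a ∈ X₀` turns it into `xₙ^k`. -/
theorem mOfW_of_mul_pow_mul_sub_mem (a : X0 n) (b : Fin n) (k : ℕ) :
    mOfW K (FreeMonoid.of (a : Fin n) * FreeMonoid.of (px n 1) ^ k * FreeMonoid.of b) -
      mOfW K (FreeMonoid.of (px n n) ^ k) * m2 K (a : Fin n) b ∈ idealSpan K (Mext' K n M0) := by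
  have hcomm : mOfW K (FreeMonoid.of (a : Fin n)) * mOfW K (FreeMonoid.of (px n 1)) -
      mOfW K (FreeMonoid.of (px n n)) * mOfW K (FreeMonoid.of (a : Fin n)) ∈
      idealSpan K (Mext' K n M0) := by
    rw [← neg_mem_iff, neg_sub, ← mOfW_mul, ← mOfW_mul]
    exact subset_idealSpan (m2_px_sub_m2_px_one_mem_Mext' a)
  have := mul_mem_idealSpan_right (mOfW K (FreeMonoid.of b))
    (mul_pow_sub_pow_mul_mem_idealSpan hcomm k)
  simpa only [m2, mOfW_mul, mOfW_pow, sub_mul, mul_assoc] using this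

end Extension

theorem ext_interleaved_relations_general
    (K : Type*) [Field K] (n : ℕ) [Fact (5 ≤ n)]
    (M0 : Set (MonoidAlgebra K (FreeMonoid (X0 n)))) (k : ℕ) :
    (∀ a b : X0 n,
      m2 K a b ∈ M0 \ {m2 K (topEl (X0 n)) (botEl (X0 n))} →
      mOfW K (FreeMonoid.of (a : Fin n) * (FreeMonoid.of (px n 1)) ^ k *
        FreeMonoid.of (b : Fin n)) ∈ idealSpan K (Mext' K n M0)) ∧
    (∀ a b c d : X0 n,
      m2 K a b - m2 K c d ∈ M0 \ {m2 K (topEl (X0 n)) (botEl (X0 n))} →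
      mOfW K (FreeMonoid.of (a : Fin n) * (FreeMonoid.of (px n 1)) ^ k *
          FreeMonoid.of (b : Fin n)) -
        mOfW K (FreeMonoid.of (c : Fin n) * (FreeMonoid.of (px n 1)) ^ k *
          FreeMonoid.of (d : Fin n)) ∈ idealSpan K (Mext' K n M0)) := by
  have xnk_mul_mem := fun {g} (hg : g ∈ M0 \ {m2 K (topEl (X0 n)) (botEl (X0 n))}) =>
    mul_mem_idealSpan_left (mOfW K (FreeMonoid.of (px n n) ^ k))
      (subset_idealSpan (K := K) (emb_mem_Mext' hg))
  constructor
  · intro a b hab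
    have hgen := xnk_mul_mem hab
    rw [emb_m2] at hgen
    simpa only [sub_add_cancel] using add_mem (mOfW_of_mul_pow_mul_sub_mem a b k) hgen
  · intro a b c d habcd
    have hgen := xnk_mul_mem habcd
    rw [emb_sub, emb_m2, emb_m2, mul_sub] at hgen
    convert add_mem
      (sub_mem (mOfW_of_mul_pow_mul_sub_mem a b k) (mOfW_of_mul_pow_mul_sub_mem c d k)) hgen using 1
    abel

/-- **Lemma (m30).** In the extension construction: if `ab ∈ M₀'` then
`a x_1^k b ∈ I`, and if `ab - cd ∈ M₀'` then `a x_1^k b = c x_1^k d (mod I)`. -/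
theorem ext_interleaved_relations
    (K : Type*) [Field K] (n : ℕ) [Fact (5 ≤ n)]
    (M0 : Set (MonoidAlgebra K (FreeMonoid (X0 n)))) (hM0 : IsQHS K M0) (k : ℕ) :
    (∀ a b : X0 n,
      m2 K a b ∈ M0 \ {m2 K (topEl (X0 n)) (botEl (X0 n))} →
      mOfW K (FreeMonoid.of (a : Fin n) * (FreeMonoid.of (px n 1)) ^ k *
        FreeMonoid.of (b : Fin n)) ∈ idealSpan K (Mext' K n M0)) ∧
    (∀ a b c d : X0 n,
      m2 K a b - m2 K c d ∈ M0 \ {m2 K (topEl (X0 n)) (botEl (X0 n))} →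
      mOfW K (FreeMonoid.of (a : Fin n) * (FreeMonoid.of (px n 1)) ^ k *
          FreeMonoid.of (b : Fin n)) -
        mOfW K (FreeMonoid.of (c : Fin n) * (FreeMonoid.of (px n 1)) ^ k *
          FreeMonoid.of (d : Fin n)) ∈ idealSpan K (Mext' K n M0)) :=
  ext_interleaved_relations_general K n M0 k
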